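/- Let {x_{t,i}} for t = 1,…,T and i ∈ Q_t with |Q_t| ≤ K satisfy ‖x_{t,i}‖₂ ≤ 1, and let λ > 0. Define V_t = Σ_{s=1}^{t−1} Σ_{i∈Q_s} x_{s,i} x_{s,i}ᵀ + λ·I_d. Then: Σ_{t=1}^T min{ Σ_{i∈Q_t} ‖x_{t,i}‖²_{V_t^{-1}}, 1 } ≤ 2d·log(1 + K·T/(d·λ)). -/

import Mathlib

/-!
Adding `M_t = Σ_{i ∈ Q_t} x_{t,i} x_{t,i}ᵀ` to `V_t` multiplies the determinant by at least
`1 + tr(V_t⁻¹ M_t)` (whiten by `√V_t` and use `det (1 + N) ≥ 1 + tr N` for `N ⪰ 0`), and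
`min a 1 ≤ 2 log (1 + a)`, so the sum telescopes to `2 (log det V_T - log det V_0)`.
Finally `log det V_0 = d log λ`, while AM–GM on the eigenvalues bounds `log det V_T` by
`d log (tr V_T / d) ≤ d log (λ + K T / d)`.
-/

open Matrix

theorem Finset.one_add_sum_le_prod_one_add {ι R : Type*} [CommSemiring R] [PartialOrder R]
    [IsOrderedRing R] (s : Finset ι) {f : ι → R} (hf : ∀ i ∈ s, 0 ≤ f i) :
    1 + ∑ i ∈ s, f i ≤ ∏ i ∈ s, (1 + f i) := by
  classical
  induction s using Finset.induction_on with
  | empty => simp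
  | insert a s ha ih =>
    rw [sum_insert ha, prod_insert ha]
    have hfa : 0 ≤ f a := hf a (mem_insert_self a s)
    have hs := ih fun i hi => hf i (mem_insert_of_mem hi)
    calc 1 + (f a + ∑ i ∈ s, f i) ≤ 1 + (f a + ∑ i ∈ s, f i) + f a * ∑ i ∈ s, f i :=
          le_add_of_nonneg_right
            (mul_nonneg hfa (sum_nonneg fun i hi => hf i (mem_insert_of_mem hi)))
      _ = (1 + f a) * (1 + ∑ i ∈ s, f i) := by ring
      _ ≤ (1 + f a) * ∏ i ∈ s, (1 + f i) :=
          mul_le_mul_of_nonneg_left hs (add_nonneg zero_le_one hfa)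

theorem min_one_le_two_mul_log_one_add {a : ℝ} (ha : 0 ≤ a) :
    min a 1 ≤ 2 * Real.log (1 + a) := by
  set b := min a 1
  have hb0 : 0 ≤ b := le_min ha zero_le_one
  have hb1 : b ≤ 1 := min_le_right a 1
  have h1b : 0 < 1 + b := by linarith
  calc b ≤ 2 * (b / (1 + b)) := by
        rw [mul_div_assoc', le_div_iff₀ h1b]
        nlinarith
    _ = 2 * (1 - (1 + b)⁻¹) := by field_simp; ring
    _ ≤ 2 * Real.log (1 + b) := by
        gcongr; exact Real.one_sub_inv_le_log_of_pos h1b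
    _ ≤ 2 * Real.log (1 + a) := by
        gcongr; exact min_le_left a 1

namespace Matrix

variable {n : Type*}

theorem posDef_of_forall_succ_eq_add {V M : ℕ → Matrix n n ℝ} (hV0 : (V 0).PosDef)
    (hM : ∀ t, (M t).PosSemidef) (hV : ∀ t, V (t + 1) = V t + M t) (t : ℕ) : (V t).PosDef := by
  induction t with
  | zero => exact hV0
  | succ t ih => rw [hV t]; exact ih.add_posSemidef (hM t)

variable [Fintype n]

theorem trace_sum_vecMulVec_self_le_card {ι : Type*} (s : Finset ι) (x : ι → n → ℝ)
    (hx : ∀ i ∈ s, x i ⬝ᵥ x i ≤ 1) : (∑ i ∈ s, vecMulVec (x i) (x i)).trace ≤ s.card := by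
  rw [trace_sum]
  simpa using Finset.sum_le_sum fun i hi => (trace_vecMulVec (x i) (x i)).trans_le (hx i hi)

theorem trace_mul_vecMulVec_self {R : Type*} [CommSemiring R] (A : Matrix n n R)
    (x : n → R) : (A * vecMulVec x x).trace = x ⬝ᵥ A *ᵥ x := by
  rw [mul_vecMulVec, trace_vecMulVec, dotProduct_comm]

variable [DecidableEq n]

open scoped MatrixOrder in
theorem PosSemidef.trace_mul_nonneg {A B : Matrix n n ℝ} (hA : A.PosSemidef)
    (hB : B.PosSemidef) : 0 ≤ (A * B).trace := by
  obtain ⟨C, rfl⟩ := CStarAlgebra.nonneg_iff_eq_star_mul_self.mp hB.nonneg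
  rw [← mul_assoc, trace_mul_cycle]
  exact (hA.mul_mul_conjTranspose_same C).trace_nonneg

theorem PosSemidef.one_add_trace_le_det_one_add {N : Matrix n n ℝ} (hN : N.PosSemidef) :
    1 + N.trace ≤ (1 + N).det := by
  set U : Matrix n n ℝ := (hN.1.eigenvectorUnitary : Matrix n n ℝ)
  have hU : U * star U = 1 := Unitary.mul_star_self_of_mem hN.1.eigenvectorUnitary.2
  have hU' : star U * U = 1 := Unitary.star_mul_self_of_mem hN.1.eigenvectorUnitary.2
  have hconj : 1 + N = U * diagonal (fun i => 1 + hN.1.eigenvalues i) * star U := by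
    have hdiag : diagonal (fun i => 1 + hN.1.eigenvalues i)
        = 1 + diagonal (RCLike.ofReal ∘ hN.1.eigenvalues) := by
      rw [← diagonal_one, diagonal_add]; rfl
    rw [hdiag, mul_add, add_mul, mul_one, hU]
    exact congrArg (1 + ·) hN.1.spectral_theorem
  rw [hconj, det_conj_of_mul_eq_one hU hU', det_diagonal, hN.1.trace_eq_sum_eigenvalues]
  exact Finset.univ.one_add_sum_le_prod_one_add fun i _ => hN.eigenvalues_nonneg i

open scoped MatrixOrder in
/-- Whitening by `S = √V` turns `V + M` into `S (1 + S⁻¹ M S⁻¹) S`. -/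
theorem PosDef.det_mul_one_add_trace_inv_mul_le_det_add {V M : Matrix n n ℝ}
    (hV : V.PosDef) (hM : M.PosSemidef) :
    V.det * (1 + (V⁻¹ * M).trace) ≤ (V + M).det := by
  set S := CFC.sqrt V
  have hSS : S * S = V := CFC.sqrt_mul_sqrt_self V hV.posSemidef.nonneg
  have hS : IsUnit S.det :=
    (isUnit_iff_isUnit_det S).1 ((CFC.isUnit_sqrt_iff V hV.posSemidef.nonneg).2 hV.isUnit)
  have hSinv : (S⁻¹)ᴴ = S⁻¹ := (CFC.sqrt_nonneg V).posSemidef.isHermitian.inv.eq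
  set N := S⁻¹ * M * S⁻¹
  have hN : N.PosSemidef := by
    have h := hM.conjTranspose_mul_mul_same S⁻¹
    rwa [hSinv] at h
  have hfact : V + M = S * (1 + N) * S := by
    rw [mul_add, add_mul, mul_one, hSS]
    simp only [N, mul_assoc, nonsing_inv_mul _ hS, mul_one, mul_nonsing_inv_cancel_left _ _ hS]
  have htr : N.trace = (V⁻¹ * M).trace := by
    rw [trace_mul_cycle, ← mul_inv_rev, hSS]
  calc V.det * (1 + (V⁻¹ * M).trace) = V.det * (1 + N.trace) := by rw [htr]
    _ ≤ V.det * (1 + N).det :=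
        mul_le_mul_of_nonneg_left hN.one_add_trace_le_det_one_add hV.det_pos.le
    _ = (V + M).det := by rw [hfact, det_mul, det_mul, ← hSS, det_mul]; ring

theorem PosDef.log_det_le_card_mul_log {V : Matrix n n ℝ} (hV : V.PosDef) {c : ℝ}
    (hc : 0 < c) (htr : V.trace ≤ Fintype.card n * c) :
    Real.log V.det ≤ Fintype.card n * Real.log c := by
  set μ := hV.1.eigenvalues
  have hlog : ∀ i, Real.log (μ i) ≤ Real.log c + (μ i / c - 1) := by
    intro i
    have := Real.log_le_sub_one_of_pos (div_pos (hV.eigenvalues_pos i) hc)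
    rw [Real.log_div (hV.eigenvalues_pos i).ne' hc.ne'] at this
    linarith
  have hsum : ∑ i, μ i / c ≤ Fintype.card n := by
    rw [← Finset.sum_div, div_le_iff₀ hc]
    simpa [hV.1.trace_eq_sum_eigenvalues] using htr
  rw [hV.1.det_eq_prod_eigenvalues]
  simp only [RCLike.ofReal_real_eq_id, id_eq]
  rw [Real.log_prod fun i _ => (hV.eigenvalues_pos i).ne']
  calc ∑ i, Real.log (μ i) ≤ ∑ i, (Real.log c + (μ i / c - 1)) :=
        Finset.sum_le_sum fun i _ => hlog i
    _ = Fintype.card n * Real.log c + (∑ i, μ i / c - Fintype.card n) := by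
        simp [Finset.sum_add_distrib, Finset.sum_sub_distrib]
    _ ≤ Fintype.card n * Real.log c := by linarith

theorem sum_min_trace_inv_mul_le_two_mul_log_det_sub {V M : ℕ → Matrix n n ℝ}
    (hV0 : (V 0).PosDef) (hM : ∀ t, (M t).PosSemidef) (hV : ∀ t, V (t + 1) = V t + M t)
    (T : ℕ) :
    ∑ t ∈ Finset.range T, min ((V t)⁻¹ * M t).trace 1
      ≤ 2 * (Real.log (V T).det - Real.log (V 0).det) := by
  have hVpd := posDef_of_forall_succ_eq_add hV0 hM hV
  have hstep : ∀ t, min ((V t)⁻¹ * M t).trace 1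
      ≤ 2 * (Real.log (V (t + 1)).det - Real.log (V t).det) := by
    intro t
    have htr := (hVpd t).inv.posSemidef.trace_mul_nonneg (hM t)
    have hdet := (hVpd t).det_mul_one_add_trace_inv_mul_le_det_add (hM t)
    rw [← hV t] at hdet
    have hlog := Real.log_le_log (mul_pos (hVpd t).det_pos (by positivity)) hdet
    rw [Real.log_mul (hVpd t).det_pos.ne' (by positivity)] at hlog
    linarith [min_one_le_two_mul_log_one_add htr]
  calc ∑ t ∈ Finset.range T, min ((V t)⁻¹ * M t).trace 1
      ≤ ∑ t ∈ Finset.range T, 2 * (Real.log (V (t + 1)).det - Real.log (V t).det) :=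
        Finset.sum_le_sum fun t _ => hstep t
    _ = 2 * (Real.log (V T).det - Real.log (V 0).det) := by
        rw [← Finset.mul_sum, Finset.sum_range_sub (fun t => Real.log (V t).det)]

end Matrix

/-- unweighted elliptical potential bound. With contexts of ℓ₂-norm at
most 1, assortments of size at most `K`, and `V_t = Σ_{s<t} Σ_{i∈Q_s} x_{s,i}x_{s,i}ᵀ + λI`,
`Σ_{t<T} min(Σ_{i∈Q_t} ‖x_{t,i}‖²_{V_t⁻¹}, 1) ≤ 2d·log(1 + KT/(dλ))`. -/
theorem elliptical_potential_V_bound {d : ℕ} (hd : 0 < d) {ι : Type*}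
    (T K : ℕ) (Q : ℕ → Finset ι) (hQ : ∀ t, (Q t).card ≤ K)
    (x : ℕ → ι → Fin d → ℝ)
    (hx : ∀ t i, Real.sqrt (x t i ⬝ᵥ x t i) ≤ 1)
    (lam : ℝ) (hlam : 0 < lam)
    (V : ℕ → Matrix (Fin d) (Fin d) ℝ)
    (hV : ∀ t, V t = (∑ s ∈ Finset.range t, ∑ i ∈ Q s,
        Matrix.vecMulVec (x s i) (x s i)) + lam • (1 : Matrix (Fin d) (Fin d) ℝ)) :
    ∑ t ∈ Finset.range T,
        min (∑ i ∈ Q t, x t i ⬝ᵥ (V t)⁻¹.mulVec (x t i)) 1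
      ≤ 2 * d * Real.log (1 + K * T / (d * lam)) := by
  set M : ℕ → Matrix (Fin d) (Fin d) ℝ := fun t => ∑ i ∈ Q t, vecMulVec (x t i) (x t i)
  have hM : ∀ t, (M t).PosSemidef := fun t =>
    posSemidef_sum _ fun i _ => by simpa using posSemidef_vecMulVec_self_star (x t i)
  have hVsucc : ∀ t, V (t + 1) = V t + M t := fun t => by
    rw [hV, hV, Finset.sum_range_succ, add_right_comm]
  have hV0 : V 0 = lam • 1 := by simp [hV]
  have hV0pd : (V 0).PosDef := hV0 ▸ PosDef.one.smul hlam
  have htrace : (V T).trace ≤ d * (lam + K * T / d) := by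
    calc (V T).trace = ∑ s ∈ Finset.range T, (M s).trace + d * lam := by
          simp [hV, M, trace_sum, mul_comm]
      _ ≤ ∑ _s ∈ Finset.range T, (K : ℝ) + d * lam := by
          gcongr with s
          exact (trace_sum_vecMulVec_self_le_card (Q s) (x s) fun i _ =>
            Real.sqrt_le_one.mp (hx s i)).trans (mod_cast hQ s)
      _ = d * (lam + K * T / d) := by
          simp only [Finset.sum_const, Finset.card_range, nsmul_eq_mul]
          field_simp
          ring
  have hlogdet := (posDef_of_forall_succ_eq_add hV0pd hM hVsucc T).log_det_le_card_mul_log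
    (c := lam + K * T / d) (by positivity) (by rwa [Fintype.card_fin])
  have hlogdet0 : Real.log (V 0).det = d * Real.log lam := by
    rw [hV0, det_smul, det_one, mul_one, Fintype.card_fin, Real.log_pow]
  have hterm : ∀ t, ∑ i ∈ Q t, x t i ⬝ᵥ (V t)⁻¹ *ᵥ x t i = ((V t)⁻¹ * M t).trace := fun t => by
    simp only [M, Finset.mul_sum, trace_sum, trace_mul_vecMulVec_self]
  simp_rw [hterm]
  calc _ ≤ 2 * (Real.log (V T).det - Real.log (V 0).det) :=
        sum_min_trace_inv_mul_le_two_mul_log_det_sub hV0pd hM hVsucc T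
    _ ≤ 2 * d * (Real.log (lam + K * T / d) - Real.log lam) := by
        rw [Fintype.card_fin] at hlogdet
        linarith
    _ = 2 * d * Real.log (1 + K * T / (d * lam)) := by
        rw [← Real.log_div (by positivity) hlam.ne']
        congr 2
        field_simp
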